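/- arXiv:math/0608663 — 3 statements merged into one kernel-verified Lean document; each statement's English description precedes it below -/
import Mathlib

section
/- Let μ be a probability measure on a measurable space I and let f : I → [0,∞) be μ-integrable. Then ∫_I ( √f − √(∫_I f dμ) )² dμ ≤ 2 ∫_I ( √f − ∫_I √f dμ )² dμ. -/
open MeasureTheory Real

/-- **A mean-square-root comparison (inequality `eq:utile0`).**
For a probability measure `μ` and a non-negative integrable function `f`,
`∫ (√f − √(∫ f dμ))² dμ ≤ 2 ∫ (√f − ∫ √f dμ)² dμ`. -/
theorem statement9
    {α : Type*} [MeasurableSpace α] (μ : Measure α) [IsProbabilityMeasure μ]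
    (f : α → ℝ) (hmeas : Measurable f) (hpos : ∀ x, 0 ≤ f x) (hint : Integrable f μ) :
    ∫ x, (Real.sqrt (f x) - Real.sqrt (∫ y, f y ∂μ)) ^ 2 ∂μ ≤
      2 * ∫ x, (Real.sqrt (f x) - ∫ y, Real.sqrt (f y) ∂μ) ^ 2 ∂μ := by
  set I1 : ℝ := ∫ y, f y ∂μ with hI1
  set m : ℝ := ∫ y, Real.sqrt (f y) ∂μ with hm
  have hg2 : Integrable (fun x => Real.sqrt (f x) ^ 2) μ :=
    hint.congr (ae_of_all _ fun x => (sq_sqrt (hpos x)).symm)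
  have hg : Integrable (fun x => Real.sqrt (f x)) μ := by
    refine ((integrable_const (1 : ℝ)).add hint).mono'
      (hmeas.sqrt.aestronglyMeasurable) (ae_of_all _ fun x => ?_)
    rw [Real.norm_eq_abs, abs_of_nonneg (sqrt_nonneg _)]
    show Real.sqrt (f x) ≤ 1 + f x
    nlinarith [sq_nonneg (Real.sqrt (f x) - 1), sq_sqrt (hpos x), sqrt_nonneg (f x)]
  have hI1g2 : ∫ x, Real.sqrt (f x) ^ 2 ∂μ = I1 := by
    rw [hI1]
    exact integral_congr_ae (ae_of_all _ fun x => sq_sqrt (hpos x))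
  have key : ∀ c : ℝ, ∫ x, (Real.sqrt (f x) - c) ^ 2 ∂μ = I1 - 2 * c * m + c ^ 2 := by
    intro c
    have heq : (fun x => (Real.sqrt (f x) - c) ^ 2)
        = fun x => Real.sqrt (f x) ^ 2 - (2 * c) * Real.sqrt (f x) + c ^ 2 :=
      funext fun x => by ring
    rw [heq]
    have h1 : ∫ x, (Real.sqrt (f x) ^ 2 - 2 * c * Real.sqrt (f x) + c ^ 2) ∂μ
        = (∫ x, (Real.sqrt (f x) ^ 2 - 2 * c * Real.sqrt (f x)) ∂μ) + ∫ _x, (c ^ 2 : ℝ) ∂μ :=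
      integral_add (hg2.sub (hg.const_mul _)) (integrable_const _)
    have h2 : ∫ x, (Real.sqrt (f x) ^ 2 - 2 * c * Real.sqrt (f x)) ∂μ
        = (∫ x, Real.sqrt (f x) ^ 2 ∂μ) - ∫ x, 2 * c * Real.sqrt (f x) ∂μ :=
      integral_sub hg2 (hg.const_mul _)
    have h3 : ∫ x, 2 * c * Real.sqrt (f x) ∂μ = 2 * c * m := integral_const_mul _ _
    rw [h1, h2, h3, hI1g2, integral_const]
    simp
  have hm0 : 0 ≤ m := integral_nonneg fun x => sqrt_nonneg _
  have hvar : 0 ≤ I1 - m ^ 2 := by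
    have h := key m
    have h0 : 0 ≤ ∫ x, (Real.sqrt (f x) - m) ^ 2 ∂μ :=
      integral_nonneg fun x => sq_nonneg _
    nlinarith
  have hI10 : 0 ≤ I1 := integral_nonneg hpos
  have hM2 : Real.sqrt I1 ^ 2 = I1 := sq_sqrt hI10
  have hmM : m ≤ Real.sqrt I1 := by
    nlinarith [sqrt_nonneg I1]
  rw [key (Real.sqrt I1), key m]
  nlinarith [sqrt_nonneg I1]
end

section
/- Let n ≥ 1, X = {1,...,n}, and let f : X → ℝ be a non-negative nondecreasing function with √(f(n)) − √(f(1)) = R. Then for every D ∈ {1,...,n} there exist a partition (I_1,...,I_K) of X into K ≤ D intervals of consecutive integers and a function g = Σ_{k=1}^K β_k 1_{I_k} (with real constants β_k) such that Σ_{i=1}^n ( √(f(i)) − √(g(i)) )² ≤ n R² / D². -/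
/-!
Put `s = √f` and `ε = R / D`. Cut `{1, …, n}` greedily: a piece starting at `a` ends just
before the first index where `s` exceeds `s a + ε`. Each new piece starts more than `ε` above
the previous start, and `s` climbs by only `R = D ε` in total, so there are at most `D` pieces.
Taking `g` equal to `f` at the left end of each piece, `0 ≤ √(f i) - √(g i) ≤ ε`, and summing
`ε²` over the `n` points gives `n R² / D²`.
-/

open Finset

theorem exists_cuts_of_monotone {s : ℕ → ℝ} (hs : Monotone s) {ε : ℝ} (hε : 0 ≤ ε) {n : ℕ}
    (D : ℕ) :
    ∀ a ≤ n, (∀ y < n, s y ≤ s a + (D + 1) * ε) →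
      ∃ S : Finset ℕ, a ∈ S ∧ n ∈ S ∧ (∀ x ∈ S, x ≤ n) ∧ #S ≤ D + 2 ∧
        ∀ x ∈ S, ∀ y < n, x ≤ y → (∀ z ∈ S, x < z → y < z) → s y ≤ s x + ε := by
  induction D with
  | zero =>
    intro a ha hbound
    refine ⟨{a, n}, by simp, by simp, by simp [ha], card_le_two, ?_⟩
    intro x hx y hy hxy _
    rcases mem_insert.mp hx with rfl | hx
    · simpa using hbound y hy
    · rw [mem_singleton.mp hx] at hxy
      omega
  | succ D ih =>
    intro a ha hbound
    have hex : ∃ m, n ≤ m ∨ s a + ε < s m := ⟨n, Or.inl le_rfl⟩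
    set c := Nat.find hex
    have hcn : c ≤ n := Nat.find_min' hex (Or.inl le_rfl)
    have hbefore : ∀ y < c, s y ≤ s a + ε := fun y hy => by
      simpa using (not_or.mp (Nat.find_min hex hy)).2
    have hac : a < n → a < c := fun han => by
      by_contra! hca
      rcases Nat.find_spec hex with h | h
      · omega
      · linarith [hs hca]
    have hcbound : ∀ y < n, s y ≤ s c + (D + 1) * ε := fun y hy => by
      have hDε : 0 ≤ (D + 1) * ε := by positivity
      rcases Nat.find_spec hex with h | h
      · linarith [hs (show y ≤ c by omega)]
      · push_cast at hbound
        linarith [hbound y hy]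
    obtain ⟨S, hcS, hnS, hSn, hcard, hosc⟩ := ih c hcn hcbound
    refine ⟨insert a S, mem_insert_self _ _, mem_insert_of_mem hnS, ?_,
      (card_insert_le _ _).trans (by omega), ?_⟩
    · simpa [ha] using hSn
    intro x hx y hy hxy hnext
    rcases mem_insert.mp hx with rfl | hx
    · exact hbefore y (hnext c (mem_insert_of_mem hcS) (hac (by omega)))
    · exact hosc x hx y hy hxy fun z hz => hnext z (mem_insert_of_mem hz)

namespace Finset

variable {S : Finset ℕ} {K : ℕ}

theorem orderEmbOfFin_zero_eq_zero (hS : #S = K + 1) (h0 : 0 ∈ S) : S.orderEmbOfFin hS 0 = 0 := by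
  obtain ⟨m, hm⟩ : 0 ∈ Set.range (S.orderEmbOfFin hS) := by simpa using h0
  have := (S.orderEmbOfFin hS).monotone (Fin.zero_le m)
  omega

theorem orderEmbOfFin_last_eq (hS : #S = K + 1) {n : ℕ} (hn : n ∈ S) (hSn : ∀ x ∈ S, x ≤ n) :
    S.orderEmbOfFin hS (Fin.last K) = n := by
  obtain ⟨m, hm⟩ : n ∈ Set.range (S.orderEmbOfFin hS) := by simpa using hn
  have := (S.orderEmbOfFin hS).monotone (Fin.le_last m)
  have := hSn _ (S.orderEmbOfFin_mem hS (Fin.last K))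
  omega

theorem findGreatest_mem_eq_orderEmbOfFin (hS : #S = K + 1) (k : Fin K) {i : ℕ}
    (hki : S.orderEmbOfFin hS k.castSucc ≤ i) (hik : i < S.orderEmbOfFin hS k.succ) :
    Nat.findGreatest (· ∈ S) i = S.orderEmbOfFin hS k.castSucc := by
  have hmem : Nat.findGreatest (· ∈ S) i ∈ S := Nat.findGreatest_spec hki (orderEmbOfFin_mem ..)
  obtain ⟨m, hm⟩ : Nat.findGreatest (· ∈ S) i ∈ Set.range (S.orderEmbOfFin hS) := by
    simpa using hmem
  have hmk : m < k.succ :=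
    (S.orderEmbOfFin hS).lt_iff_lt.mp (hm ▸ (Nat.findGreatest_le i).trans_lt hik)
  have hmk' : m ≤ k.castSucc := Fin.le_castSucc_iff.mpr hmk
  exact le_antisymm (hm ▸ (S.orderEmbOfFin hS).monotone hmk')
    (Nat.le_findGreatest hki (orderEmbOfFin_mem ..))

end Finset

theorem sq_sub_findGreatest_le {s : ℕ → ℝ} (hs : Monotone s) {ε : ℝ} {S : Finset ℕ} {n : ℕ}
    (h0 : 0 ∈ S)
    (hosc : ∀ x ∈ S, ∀ y < n, x ≤ y → (∀ z ∈ S, x < z → y < z) → s y ≤ s x + ε)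
    {i : ℕ} (hi : i < n) :
    (s i - s (Nat.findGreatest (· ∈ S) i)) ^ 2 ≤ ε ^ 2 := by
  have hle : Nat.findGreatest (· ∈ S) i ≤ i := Nat.findGreatest_le i
  have hup := hosc _ (Nat.findGreatest_spec (Nat.zero_le i) h0) i hi hle fun z hz hlt =>
    lt_of_not_ge fun hzi => Nat.findGreatest_is_greatest hlt hzi hz
  exact pow_le_pow_left₀ (sub_nonneg.mpr (hs hle)) (by linarith) 2

/-- **Lemma `monotone`: piecewise-constant approximation of a monotone function.**
Let `f : {1,…,n} → ℝ` be non-negative and nondecreasing with `√(f n) − √(f 1) = R`.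
For every `D ∈ {1,…,n}` there is a partition of `{1,…,n}` into `K ≤ D` intervals of
consecutive integers (given by boundaries `0 = j₀ < j₁ < … < j_K = n`) and a piecewise
constant function `g = ∑ β_k 1_{I_k}` such that
`∑ᵢ (√(f i) − √(g i))² ≤ n R² / D²`. -/
theorem statement11
    (n : ℕ) (hn : 1 ≤ n) (f : Fin n → ℝ)
    (hmono : Monotone f) (R : ℝ)
    (hR : Real.sqrt (f ⟨n - 1, by omega⟩) - Real.sqrt (f ⟨0, by omega⟩) = R) :
    ∀ D : ℕ, 1 ≤ D → D ≤ n →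
      ∃ (K : ℕ) (_ : 1 ≤ K) (_ : K ≤ D) (j : Fin (K + 1) → ℕ) (β : Fin K → ℝ)
        (g : Fin n → ℝ),
        j 0 = 0 ∧ j (Fin.last K) = n ∧ StrictMono j ∧
        (∀ (k : Fin K) (i : Fin n),
          j k.castSucc ≤ (i : ℕ) → (i : ℕ) < j k.succ → g i = β k) ∧
        ∑ i, (Real.sqrt (f i) - Real.sqrt (g i)) ^ 2 ≤ n * R ^ 2 / D ^ 2 := by
  intro D hD _
  set F : ℕ → ℝ := fun m => f ⟨min m (n - 1), by omega⟩
  have hF : Monotone F := fun a b hab => hmono (Fin.mk_le_mk.mpr (by omega))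
  have hFf (i : Fin n) : F i = f i := congrArg f (Fin.ext (by simp; omega))
  have hs : Monotone (Real.sqrt ∘ F) := Real.sqrt_monotone.comp hF
  set ε := R / D
  have hR' : √(F (n - 1)) - √(F 0) = R := by simpa [F] using hR
  have hRε : R = D * ε := (mul_div_cancel₀ R (by positivity)).symm
  have hε : 0 ≤ ε :=
    div_nonneg (by linarith [Real.sqrt_le_sqrt (hF (Nat.zero_le (n - 1)))]) D.cast_nonneg
  have hbound : ∀ y < n, √(F y) ≤ √(F 0) + ((D - 1 : ℕ) + 1) * ε := fun y hy => by
    rw [Nat.cast_sub hD, Nat.cast_one, sub_add_cancel, ← hRε]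
    linarith [Real.sqrt_le_sqrt (hF (show y ≤ n - 1 by omega))]
  obtain ⟨S, h0S, hnS, hSn, hcard, hosc⟩ :=
    exists_cuts_of_monotone hs hε (D - 1) 0 (Nat.zero_le n) hbound
  obtain ⟨K, hK⟩ : ∃ K, #S = K + 1 := ⟨#S - 1, by have := card_pos.mpr ⟨0, h0S⟩; omega⟩
  have h0n : ({0, n} : Finset ℕ) ⊆ S := insert_subset h0S (singleton_subset_iff.mpr hnS)
  have hK1 : 1 ≤ K := by
    have := card_le_card h0n
    rw [card_pair (by omega)] at this
    omega
  refine ⟨K, hK1, by omega, S.orderEmbOfFin hK, fun k => F (S.orderEmbOfFin hK k.castSucc),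
    fun i => F (Nat.findGreatest (· ∈ S) i), orderEmbOfFin_zero_eq_zero hK h0S,
    orderEmbOfFin_last_eq hK hnS hSn, (S.orderEmbOfFin hK).strictMono, ?_, ?_⟩
  · exact fun k i hki hik => congrArg F (findGreatest_mem_eq_orderEmbOfFin hK k hki hik)
  calc ∑ i, (√(f i) - √(F (Nat.findGreatest (· ∈ S) i))) ^ 2
      ≤ ∑ _i : Fin n, ε ^ 2 := sum_le_sum fun i _ => by
        simpa [hFf] using sq_sub_findGreatest_le hs h0S hosc i.2
    _ = n * R ^ 2 / D ^ 2 := by simp [ε, div_pow]; ring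
end

section
/- Right-censored survival data. Let T and C be non-negative random variables on a probability space, with T having common density p with respect to Lebesgue measure and P[T ≥ 1] > 0; set T̃ = min{T, C}, Y_t = 1_{T̃ ≥ t}, and s(t) = p(t)/P[T ≥ t] for t ∈ [0,1) (the hazard rate). Assume that for all t ≥ 0, P[T ≤ t, T ≤ C] = E[∫_0^t s(u) Y_u du]. Then: (i) ∫_0^1 s(t) dt = −log(P[T ≥ 1]); and (ii) for every interval I ⊆ [0,1), Var[∫_I s(t) Y_t dt] ≤ 2 E[∫_I s(t) Y_t dt]. -/
/-!
(i) The survival function `S t = ℙ[T ≥ t]` satisfies `S b = S a - ∫ t in a..b, p t`, so it is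
absolutely continuous and, on `[0,1]`, bounded below by `S 1 > 0`. Hence `log ∘ S` is absolutely
continuous with derivative `-p / S = -s` almost everywhere, and the fundamental theorem of calculus
for absolutely continuous functions gives `∫₀¹ s = log (S 0) - log (S 1) = -log (S 1)`.

(ii) With `τ = min T C`, the variable `X = ∫_I s Y` is the integral of `s` over `I ∩ (-∞, τ]`.
Splitting `X²` along the diagonal gives `X² ≤ 2 ∫_{I ∩ (-∞,τ]} s(t) ∫_{I ∩ (-∞,t]} s(u) du dt`;
by Fubini, `E[X²] ≤ 2 ∫_I s(u) ∫_{I ∩ [u,∞)} s(t) ℙ[τ ≥ t] dt du`. By the hypothesis on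
`ℙ[T ≤ t, T ≤ C]`, the inner integral is at most the probability `ℙ[u < T ≤ 1, T ≤ C]` of an
uncensored event in `(u, 1]`, which forces `τ ≥ u`; hence
`E[X²] ≤ 2 ∫_I s(u) ℙ[τ ≥ u] du = 2 E[X]`, and `Var X ≤ E[X²]`.
-/

open MeasureTheory ProbabilityTheory Real Set
open scoped ENNReal NNReal

theorem LipschitzOnWith.comp_absolutelyContinuousOnInterval {X Y : Type*}
    [PseudoMetricSpace X] [PseudoMetricSpace Y] {g : X → Y} {K : ℝ≥0} {s : Set X}
    {f : ℝ → X} {a b : ℝ} (hg : LipschitzOnWith K g s)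
    (hf : AbsolutelyContinuousOnInterval f a b) (hfs : MapsTo f (uIcc a b) s) :
    AbsolutelyContinuousOnInterval (g ∘ f) a b := by
  rw [absolutelyContinuousOnInterval_iff] at hf ⊢
  intro ε hε
  obtain ⟨δ, hδ, hfδ⟩ := hf (ε / (K + 1)) (by positivity)
  refine ⟨δ, hδ, fun E hE hEδ => ?_⟩
  calc ∑ i ∈ Finset.range E.1, dist (g (f (E.2 i).1)) (g (f (E.2 i).2))
      ≤ ∑ i ∈ Finset.range E.1, K * dist (f (E.2 i).1) (f (E.2 i).2) :=
        Finset.sum_le_sum fun i hi =>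
          hg.dist_le_mul _ (hfs (hE.1 i hi).1) _ (hfs (hE.1 i hi).2)
    _ = K * ∑ i ∈ Finset.range E.1, dist (f (E.2 i).1) (f (E.2 i).2) := by
        rw [Finset.mul_sum]
    _ ≤ K * (ε / (K + 1)) := by gcongr; exact (hfδ E hE hEδ).le
    _ < ε := by
        rw [mul_div_assoc', div_lt_iff₀ (by positivity)]
        nlinarith

theorem integral_div_eq_log_sub_log {p G : ℝ → ℝ} {a b : ℝ} (hab : a ≤ b)
    (hp : IntervalIntegrable p volume a b)
    (hG : ∀ x ∈ Icc a b, G x = G a - ∫ t in a..x, p t) (hGpos : ∀ x ∈ Icc a b, 0 < G x) :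
    ∫ t in a..b, p t / G t = log (G a) - log (G b) := by
  set F : ℝ → ℝ := fun x => ∫ t in a..x, p t
  have hab' : uIcc a b = Icc a b := uIcc_of_le hab
  have hF : AbsolutelyContinuousOnInterval F a b :=
    hp.absolutelyContinuousOnInterval_intervalIntegral left_mem_uIcc
  have hFcont : ContinuousOn F (Icc a b) := hab' ▸ hF.continuousOn
  obtain ⟨c, hc, hcmax⟩ := isCompact_Icc.exists_isMaxOn (nonempty_Icc.2 hab) hFcont
  obtain ⟨d, -, hdmin⟩ := isCompact_Icc.exists_isMinOn (nonempty_Icc.2 hab) hFcont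
  have hψ : ContDiffOn ℝ 1 (fun y => log (G a - y)) (Icc (F d) (F c)) := by
    have hFc : F c < G a := by linarith [hGpos c hc, hG c hc]
    exact (contDiffOn_const.sub contDiffOn_id).log fun y hy => (sub_pos.2 (hy.2.trans_lt hFc)).ne'
  obtain ⟨K, hK⟩ := hψ.exists_lipschitzOnWith one_ne_zero (convex_Icc _ _) isCompact_Icc
  have hlogG : AbsolutelyContinuousOnInterval (fun x => log (G a - F x)) a b :=
    hK.comp_absolutelyContinuousOnInterval hF fun x hx => by
      rw [hab'] at hx; exact ⟨hdmin hx, hcmax hx⟩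
  have hderiv : ∀ᵐ x, x ∈ uIoc a b →
      p x / G x = -deriv (fun x => log (G a - F x)) x := by
    filter_upwards [hp.ae_hasDerivAt_integral] with x hx hxab
    have hxab' : x ∈ Icc a b := hab' ▸ uIoc_subset_uIcc hxab
    have hGx := hG x hxab'
    have := ((hx (uIoc_subset_uIcc hxab) a left_mem_uIcc).const_sub (G a)).log
      (by rw [← hGx]; exact (hGpos x hxab').ne')
    rw [this.deriv, ← hGx]
    ring
  rw [intervalIntegral.integral_congr_ae hderiv, intervalIntegral.integral_neg,
    hlogG.integral_deriv_eq_sub, ← hG b (right_mem_Icc.2 hab)]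
  simp [F]

section
variable {Ω : Type*} [MeasurableSpace Ω] {μ : Measure Ω} {T : Ω → ℝ} {p : ℝ → ℝ}

theorem integrable_of_map_eq_withDensity [IsFiniteMeasure μ] (hp : Measurable p)
    (hp0 : ∀ t, 0 ≤ p t) (hdens : μ.map T = volume.withDensity fun t => ENNReal.ofReal (p t)) :
    Integrable p := by
  refine ⟨hp.aestronglyMeasurable, ?_⟩
  rw [hasFiniteIntegral_iff_ofReal (ae_of_all _ hp0), ← setLIntegral_univ,
    ← withDensity_apply _ MeasurableSet.univ, ← hdens]
  exact measure_lt_top _ _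

theorem toReal_measure_le_eq_sub_integral [IsFiniteMeasure μ] (hT : Measurable T)
    (hp : Measurable p) (hp0 : ∀ t, 0 ≤ p t)
    (hdens : μ.map T = volume.withDensity fun t => ENNReal.ofReal (p t)) {a b : ℝ} (hab : a ≤ b) :
    (μ {ω | b ≤ T ω}).toReal = (μ {ω | a ≤ T ω}).toReal - ∫ t in a..b, p t := by
  have hmap : ∀ t, μ {ω | t ≤ T ω} = μ.map T (Ici t) := fun t => by
    rw [Measure.map_apply hT measurableSet_Ici]; rfl
  have hsplit : μ {ω | a ≤ T ω} = μ.map T (Ico a b) + μ {ω | b ≤ T ω} := by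
    rw [hmap, hmap, ← Ico_union_Ici_eq_Ici hab, measure_union
      ((Iio_disjoint_Ici le_rfl).mono_left Ico_subset_Iio_self) measurableSet_Ici]
  have hIco : (μ.map T (Ico a b)).toReal = ∫ t in a..b, p t := by
    rw [hdens, withDensity_apply _ measurableSet_Ico, intervalIntegral.integral_of_le hab,
      integral_Ioc_eq_integral_Ioo, ← integral_Ico_eq_integral_Ioo,
      integral_eq_lintegral_of_nonneg_ae (ae_of_all _ hp0) hp.aestronglyMeasurable.restrict]
  rw [hsplit, ENNReal.toReal_add (measure_ne_top _ _) (measure_ne_top _ _), hIco]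
  ring

theorem antitone_toReal_measure_le [IsFiniteMeasure μ] :
    Antitone fun t => (μ {ω | t ≤ T ω}).toReal :=
  fun _ _ h => ENNReal.toReal_mono (measure_ne_top _ _) (measure_mono fun _ hω => h.trans hω)

theorem integrableOn_hazard [IsFiniteMeasure μ] (hp : Measurable p) (hp0 : ∀ t, 0 ≤ p t)
    (hdens : μ.map T = volume.withDensity fun t => ENNReal.ofReal (p t)) {b : ℝ}
    (hb : 0 < (μ {ω | b ≤ T ω}).toReal) :
    IntegrableOn (fun t => p t / (μ {ω | t ≤ T ω}).toReal) (Iic b) := by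
  refine ((integrable_of_map_eq_withDensity hp hp0 hdens).div_const
    (μ {ω | b ≤ T ω}).toReal).integrableOn.mono'
    (hp.div antitone_toReal_measure_le.measurable).aestronglyMeasurable
    (ae_restrict_of_forall_mem measurableSet_Iic fun t ht => ?_)
  rw [norm_of_nonneg (div_nonneg (hp0 t) ENNReal.toReal_nonneg)]
  exact div_le_div_of_nonneg_left (hp0 t) hb (antitone_toReal_measure_le ht)

theorem integral_hazard_eq_log_sub_log [IsFiniteMeasure μ] (hT : Measurable T)
    (hp : Measurable p) (hp0 : ∀ t, 0 ≤ p t)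
    (hdens : μ.map T = volume.withDensity fun t => ENNReal.ofReal (p t)) {a b : ℝ} (hab : a ≤ b)
    (hb : 0 < (μ {ω | b ≤ T ω}).toReal) :
    ∫ t in a..b, p t / (μ {ω | t ≤ T ω}).toReal =
      log (μ {ω | a ≤ T ω}).toReal - log (μ {ω | b ≤ T ω}).toReal :=
  integral_div_eq_log_sub_log hab (integrable_of_map_eq_withDensity hp hp0 hdens).intervalIntegrable
    (fun _ hx => toReal_measure_le_eq_sub_integral hT hp hp0 hdens hx.1)
    (fun _ hx => hb.trans_le (antitone_toReal_measure_le hx.2))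
end

section
variable {μ : Measure ℝ} {A : Set ℝ}

theorem setLIntegral_inter_Iic_eq_indicator (g : ℝ → ℝ≥0∞) (t : ℝ) :
    ∫⁻ u in A ∩ Iic t, g u ∂μ = ∫⁻ u in A, (Iic t).indicator g u ∂μ := by
  rw [lintegral_indicator measurableSet_Iic, Measure.restrict_restrict measurableSet_Iic,
    inter_comm]

theorem setLIntegral_inter_Ici_eq_indicator (g : ℝ → ℝ≥0∞) (t : ℝ) :
    ∫⁻ u in A ∩ Ici t, g u ∂μ = ∫⁻ u in A, (Ici t).indicator g u ∂μ := by
  rw [lintegral_indicator measurableSet_Ici, Measure.restrict_restrict measurableSet_Ici,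
    inter_comm]

theorem monotone_setLIntegral_inter_Iic (g : ℝ → ℝ≥0∞) :
    Monotone fun t => ∫⁻ u in A ∩ Iic t, g u ∂μ :=
  fun _ _ h => lintegral_mono_set (inter_subset_inter_right A (Iic_subset_Iic.2 h))

theorem measurable_uncurry_mul_indicator_Iic {f g : ℝ → ℝ≥0∞} (hf : Measurable f)
    (hg : Measurable g) :
    Measurable (Function.uncurry fun t u => f t * (Iic t).indicator g u) := by
  have : (Function.uncurry fun t u => f t * (Iic t).indicator g u) =
      fun x : ℝ × ℝ => f x.1 * {x : ℝ × ℝ | x.2 ≤ x.1}.indicator (fun x => g x.2) x := by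
    ext ⟨t, u⟩; simp [indicator]
  rw [this]
  exact (hf.comp measurable_fst).mul
    ((hg.comp measurable_snd).indicator (measurableSet_le measurable_snd measurable_fst))

theorem setLIntegral_mul_setLIntegral_inter_Iic [SFinite μ] {f g : ℝ → ℝ≥0∞} (hf : Measurable f)
    (hg : Measurable g) :
    ∫⁻ t in A, f t * ∫⁻ u in A ∩ Iic t, g u ∂μ ∂μ =
      ∫⁻ u in A, g u * ∫⁻ t in A ∩ Ici u, f t ∂μ ∂μ := by
  calc ∫⁻ t in A, f t * ∫⁻ u in A ∩ Iic t, g u ∂μ ∂μ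
      = ∫⁻ t in A, ∫⁻ u in A, f t * (Iic t).indicator g u ∂μ ∂μ := by
        refine lintegral_congr fun t => ?_
        rw [setLIntegral_inter_Iic_eq_indicator,
          lintegral_const_mul _ (hg.indicator measurableSet_Iic)]
    _ = ∫⁻ u in A, ∫⁻ t in A, f t * (Iic t).indicator g u ∂μ ∂μ :=
        lintegral_lintegral_swap (measurable_uncurry_mul_indicator_Iic hf hg).aemeasurable
    _ = ∫⁻ u in A, ∫⁻ t in A, g u * (Ici u).indicator f t ∂μ ∂μ := by
        refine lintegral_congr fun u => lintegral_congr fun t => ?_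
        by_cases h : u ≤ t <;> simp [h, mul_comm]
    _ = _ := by
        refine lintegral_congr fun u => ?_
        rw [setLIntegral_inter_Ici_eq_indicator,
          lintegral_const_mul _ (hf.indicator measurableSet_Ici)]

theorem sq_setLIntegral_le_two_mul [SFinite μ] {g : ℝ → ℝ≥0∞} (hg : Measurable g) :
    (∫⁻ t in A, g t ∂μ) ^ 2 ≤ 2 * ∫⁻ t in A, g t * ∫⁻ u in A ∩ Iic t, g u ∂μ ∂μ := by
  have hmeas : Measurable fun t => g t * ∫⁻ u in A ∩ Iic t, g u ∂μ :=
    hg.mul (monotone_setLIntegral_inter_Iic g).measurable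
  calc (∫⁻ t in A, g t ∂μ) ^ 2
      = ∫⁻ t in A, g t * ∫⁻ u in A, g u ∂μ ∂μ := by
        rw [sq, lintegral_mul_const _ hg]
    _ ≤ ∫⁻ t in A, g t * ∫⁻ u in A ∩ Iic t, g u ∂μ + g t * ∫⁻ u in A ∩ Ici t, g u ∂μ ∂μ := by
        refine lintegral_mono fun t => ?_
        rw [← mul_add]
        gcongr
        calc ∫⁻ u in A, g u ∂μ ≤ ∫⁻ u in (A ∩ Iic t) ∪ (A ∩ Ici t), g u ∂μ :=
              lintegral_mono_set fun u hu => by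
                rcases le_total u t with h | h
                exacts [Or.inl ⟨hu, h⟩, Or.inr ⟨hu, h⟩]
          _ ≤ _ := lintegral_union_le _ _ _
    _ = 2 * ∫⁻ t in A, g t * ∫⁻ u in A ∩ Iic t, g u ∂μ ∂μ := by
        rw [lintegral_add_left hmeas, ← setLIntegral_mul_setLIntegral_inter_Iic hg hg, two_mul]
end

theorem lintegral_setLIntegral_inter_Iic {Ω : Type*} [MeasurableSpace Ω] {ν : Measure Ω}
    [SFinite ν] {μ : Measure ℝ} [SFinite μ] {τ : Ω → ℝ} (hτ : Measurable τ) {h : ℝ → ℝ≥0∞}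
    (hh : Measurable h) (A : Set ℝ) :
    ∫⁻ ω, ∫⁻ t in A ∩ Iic (τ ω), h t ∂μ ∂ν = ∫⁻ t in A, h t * ν {ω | t ≤ τ ω} ∂μ := by
  have hmeas : Measurable (Function.uncurry fun ω t => (Iic (τ ω)).indicator h t) := by
    have : (Function.uncurry fun ω t => (Iic (τ ω)).indicator h t) =
        {x : Ω × ℝ | x.2 ≤ τ x.1}.indicator (fun x => h x.2) := by
      ext ⟨ω, t⟩; simp [indicator]
    rw [this]
    exact (hh.comp measurable_snd).indicator
      (measurableSet_le measurable_snd (hτ.comp measurable_fst))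
  simp_rw [setLIntegral_inter_Iic_eq_indicator]
  rw [lintegral_lintegral_swap hmeas.aemeasurable]
  refine lintegral_congr fun t => ?_
  have : (fun ω => (Iic (τ ω)).indicator h t) = fun ω => h t * {ω | t ≤ τ ω}.indicator 1 ω := by
    ext ω; by_cases h : t ≤ τ ω <;> simp [h]
  rw [this, lintegral_const_mul _ (measurable_one.indicator (measurableSet_le measurable_const hτ)),
    lintegral_indicator_one (measurableSet_le measurable_const hτ)]

theorem lintegral_sq_setLIntegral_inter_Iic_le {Ω : Type*} [MeasurableSpace Ω] {ν : Measure Ω}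
    [SFinite ν] {μ : Measure ℝ} [SFinite μ] {τ : Ω → ℝ} (hτ : Measurable τ) {q : ℝ → ℝ≥0∞}
    (hq : Measurable q) {I : Set ℝ}
    (hcomp : ∀ u ∈ I, ∫⁻ t in I ∩ Ici u, q t * ν {ω | t ≤ τ ω} ∂μ ≤ ν {ω | u ≤ τ ω}) :
    ∫⁻ ω, (∫⁻ t in I ∩ Iic (τ ω), q t ∂μ) ^ 2 ∂ν ≤ 2 * ∫⁻ ω, ∫⁻ t in I ∩ Iic (τ ω), q t ∂μ ∂ν := by
  set κ : ℝ → ℝ≥0∞ := fun t => ν {ω | t ≤ τ ω}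
  have hκ : Measurable κ :=
    Antitone.measurable fun _ _ h => measure_mono fun _ hω => h.trans hω
  set H : ℝ → ℝ≥0∞ := fun t => ∫⁻ u in I ∩ Iic t, q u ∂μ
  have hH : Measurable H := (monotone_setLIntegral_inter_Iic q).measurable
  calc ∫⁻ ω, (∫⁻ t in I ∩ Iic (τ ω), q t ∂μ) ^ 2 ∂ν
      ≤ ∫⁻ ω, 2 * ∫⁻ t in I ∩ Iic (τ ω), q t * H t ∂μ ∂ν := by
        refine lintegral_mono fun ω => (sq_setLIntegral_le_two_mul hq).trans ?_
        gcongr with t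
        exact lintegral_mono_set (inter_subset_inter_left _ inter_subset_left)
    _ = 2 * ∫⁻ t in I, q t * H t * κ t ∂μ := by
        rw [lintegral_const_mul' _ _ ENNReal.ofNat_ne_top,
          lintegral_setLIntegral_inter_Iic hτ (h := fun t => q t * H t) (hq.mul hH)]
    _ = 2 * ∫⁻ t in I, q t * κ t * H t ∂μ := by
        simp only [mul_right_comm _ (H _)]
    _ = 2 * ∫⁻ u in I, q u * ∫⁻ t in I ∩ Ici u, q t * κ t ∂μ ∂μ := by
        rw [← setLIntegral_mul_setLIntegral_inter_Iic (f := fun t => q t * κ t) (hq.mul hκ) hq]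
    _ ≤ 2 * ∫⁻ u in I, q u * κ u ∂μ := by
        gcongr 1
        exact setLIntegral_mono (hq.mul hκ) fun u hu => by gcongr; exact hcomp u hu
    _ = 2 * ∫⁻ ω, ∫⁻ t in I ∩ Iic (τ ω), q t ∂μ ∂ν := by
        rw [lintegral_setLIntegral_inter_Iic hτ hq]

theorem variance_toReal_le_of_lintegral_sq_le {Ω : Type*} [MeasurableSpace Ω] {μ : Measure Ω}
    [IsProbabilityMeasure μ] {f : Ω → ℝ≥0∞} (hf : AEMeasurable f μ) (hfin : ∫⁻ ω, f ω ∂μ ≠ ∞)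
    {c : ℝ≥0} (h : ∫⁻ ω, f ω ^ 2 ∂μ ≤ c * ∫⁻ ω, f ω ∂μ) :
    variance (fun ω => (f ω).toReal) μ ≤ c * ∫ ω, (f ω).toReal ∂μ := by
  have hlt : ∀ᵐ ω ∂μ, f ω < ∞ := ae_lt_top' hf hfin
  calc variance (fun ω => (f ω).toReal) μ ≤ ∫ ω, (f ω).toReal ^ 2 ∂μ := by
        simpa using variance_le_expectation_sq hf.ennreal_toReal.aestronglyMeasurable
    _ = (∫⁻ ω, f ω ^ 2 ∂μ).toReal := by
        simp_rw [← ENNReal.toReal_pow]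
        exact integral_toReal (hf.pow_const 2) (hlt.mono fun ω hω => ENNReal.pow_lt_top hω)
    _ ≤ (c * ∫⁻ ω, f ω ∂μ).toReal := ENNReal.toReal_mono (ENNReal.mul_ne_top (by simp) hfin) h
    _ = c * ∫ ω, (f ω).toReal ∂μ := by
        rw [ENNReal.toReal_mul, integral_toReal hf hlt, ENNReal.coe_toReal]

theorem integral_setIntegral_inter_Iic {Ω : Type*} [MeasurableSpace Ω] {ν : Measure Ω}
    [SFinite ν] {τ : Ω → ℝ} (hτ : Measurable τ) {s : ℝ → ℝ} (hs : Measurable s) (hs0 : 0 ≤ s)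
    {A : Set ℝ} (hsA : IntegrableOn s A) :
    ∫ ω, (∫ t in A ∩ Iic (τ ω), s t) ∂ν =
      (∫⁻ t in A, ENNReal.ofReal (s t) * ν {ω | t ≤ τ ω}).toReal := by
  have hfin : ∀ ω, ∫⁻ t in A ∩ Iic (τ ω), ENNReal.ofReal (s t) < ∞ := fun ω =>
    (lintegral_mono_set inter_subset_left).trans_lt hsA.setLIntegral_lt_top
  simp_rw [integral_eq_lintegral_of_nonneg_ae (ae_of_all _ fun t => hs0 t)
    hs.aestronglyMeasurable.restrict]
  have hmeas : Measurable fun ω => ∫⁻ t in A ∩ Iic (τ ω), ENNReal.ofReal (s t) :=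
    (monotone_setLIntegral_inter_Iic _).measurable.comp hτ
  rw [integral_toReal hmeas.aemeasurable (ae_of_all _ hfin),
    lintegral_setLIntegral_inter_Iic hτ hs.ennreal_ofReal]

theorem setLIntegral_hazard_mul_atRisk_le {Ω : Type*} [MeasurableSpace Ω] {ν : Measure Ω}
    [IsFiniteMeasure ν] {T C : Ω → ℝ} (hT : Measurable T) (hC : Measurable C) {s : ℝ → ℝ}
    (hs : Measurable s) (hs0 : 0 ≤ s) (hsint : IntegrableOn s (Icc 0 1))
    (hmean : ∀ t ∈ Icc (0 : ℝ) 1, (ν {ω | T ω ≤ t ∧ T ω ≤ C ω}).toReal =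
      ∫ ω, (∫ u in Ioc 0 t ∩ Iic (min (T ω) (C ω)), s u) ∂ν)
    {u : ℝ} (hu : u ∈ Icc (0 : ℝ) 1) :
    ∫⁻ t in Icc u 1, ENNReal.ofReal (s t) * ν {ω | t ≤ min (T ω) (C ω)} ≤
      ν {ω | u ≤ min (T ω) (C ω)} := by
  set f : ℝ → ℝ≥0∞ := fun t => ENNReal.ofReal (s t) * ν {ω | t ≤ min (T ω) (C ω)}
  have hsint' : ∀ t ∈ Icc (0 : ℝ) 1, IntegrableOn s (Ioc 0 t) := fun t ht =>
    hsint.mono_set (Ioc_subset_Icc_self.trans (Icc_subset_Icc_right ht.2))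
  have hD : ∀ t ∈ Icc (0 : ℝ) 1, ν {ω | T ω ≤ t ∧ T ω ≤ C ω} = ∫⁻ r in Ioc 0 t, f r := by
    intro t ht
    have hfin : ∫⁻ r in Ioc 0 t, f r ≠ ∞ := by
      refine ne_top_of_le_ne_top ?_
        (lintegral_mono fun r => mul_le_mul_right (measure_mono (subset_univ _)) _)
      rw [lintegral_mul_const _ hs.ennreal_ofReal]
      exact ENNReal.mul_ne_top (hsint' t ht).setLIntegral_lt_top.ne (measure_ne_top _ _)
    rw [← ENNReal.toReal_eq_toReal_iff' (measure_ne_top _ _) hfin, hmean t ht,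
      integral_setIntegral_inter_Iic (hT.min hC) hs hs0 (hsint' t ht)]
  have hsplit : ν {ω | T ω ≤ 1 ∧ T ω ≤ C ω} =
      ν {ω | T ω ≤ u ∧ T ω ≤ C ω} + ∫⁻ t in Ioc u 1, f t := by
    rw [hD 1 (right_mem_Icc.2 zero_le_one), hD u hu, ← Ioc_union_Ioc_eq_Ioc hu.1 hu.2,
      lintegral_union measurableSet_Ioc (Ioc_disjoint_Ioc_of_le le_rfl)]
  have hcover : ν {ω | T ω ≤ 1 ∧ T ω ≤ C ω} ≤
      ν {ω | T ω ≤ u ∧ T ω ≤ C ω} + ν {ω | u ≤ min (T ω) (C ω)} := by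
    refine (measure_mono fun ω hω => ?_).trans (measure_union_le _ _)
    rcases le_or_gt (T ω) u with h | h
    · exact Or.inl ⟨h, hω.2⟩
    · exact Or.inr (le_min h.le (h.le.trans hω.2))
  rw [← setLIntegral_congr Ioc_ae_eq_Icc]
  exact (ENNReal.add_le_add_iff_left (measure_ne_top _ _)).1 (hsplit ▸ hcover)

theorem variance_setIntegral_inter_Iic_le {Ω : Type*} [MeasurableSpace Ω] {ν : Measure Ω}
    [IsProbabilityMeasure ν] {τ : Ω → ℝ} (hτ : Measurable τ) {s : ℝ → ℝ} (hs : Measurable s)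
    (hs0 : 0 ≤ s) {I : Set ℝ} (hsI : IntegrableOn s I)
    (hcomp : ∀ u ∈ I, ∫⁻ t in I ∩ Ici u, ENNReal.ofReal (s t) * ν {ω | t ≤ τ ω} ≤
      ν {ω | u ≤ τ ω}) :
    variance (fun ω => ∫ t in I ∩ Iic (τ ω), s t) ν ≤
      2 * ∫ ω, (∫ t in I ∩ Iic (τ ω), s t) ∂ν := by
  set X : Ω → ℝ≥0∞ := fun ω => ∫⁻ t in I ∩ Iic (τ ω), ENNReal.ofReal (s t)
  have hX : ∀ ω, ∫ t in I ∩ Iic (τ ω), s t = (X ω).toReal := fun ω =>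
    integral_eq_lintegral_of_nonneg_ae (ae_of_all _ fun t => hs0 t)
      hs.aestronglyMeasurable.restrict
  have hXm : Measurable X := (monotone_setLIntegral_inter_Iic _).measurable.comp hτ
  have hXfin : ∫⁻ ω, X ω ∂ν ≠ ∞ := by
    refine ne_top_of_le_ne_top hsI.setLIntegral_lt_top.ne
      ((lintegral_mono fun ω => lintegral_mono_set inter_subset_left).trans_eq ?_)
    rw [lintegral_const, measure_univ, mul_one]
  simp_rw [hX]
  exact_mod_cast variance_toReal_le_of_lintegral_sq_le (c := 2) hXm.aemeasurable hXfin
    (by exact_mod_cast lintegral_sq_setLIntegral_inter_Iic_le hτ hs.ennreal_ofReal hcomp)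

theorem statement19_general
    {Ω : Type*} [MeasureSpace Ω] [IsProbabilityMeasure (ℙ : Measure Ω)]
    (T C : Ω → ℝ) (hT : Measurable T) (hC : Measurable C)
    (hTpos : ∀ ω, 0 ≤ T ω)
    (p : ℝ → ℝ) (hp : Measurable p) (hppos : ∀ t, 0 ≤ p t)
    (hdens : Measure.map T ℙ = volume.withDensity fun t => ENNReal.ofReal (p t))
    (hsurv : 0 < (ℙ {ω | 1 ≤ T ω}).toReal)
    (s : ℝ → ℝ) (hs : ∀ t, s t = p t / (ℙ {ω | t ≤ T ω}).toReal)
    (Y : ℝ → Ω → ℝ) (hY : ∀ t ω, Y t ω = if t ≤ min (T ω) (C ω) then 1 else 0)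
    (hmean : ∀ t : ℝ, 0 ≤ t →
      (ℙ {ω | T ω ≤ t ∧ T ω ≤ C ω}).toReal = ∫ ω, (∫ u in (0:ℝ)..t, s u * Y u ω) ∂ℙ) :
    ((∫ t in (0:ℝ)..1, s t) = -Real.log ((ℙ {ω | 1 ≤ T ω}).toReal)) ∧
    ∀ I : Set ℝ, I ⊆ Set.Ico (0:ℝ) 1 → I.OrdConnected →
      variance (fun ω => ∫ t in I, s t * Y t ω) ℙ ≤
        2 * ∫ ω, (∫ t in I, s t * Y t ω) ∂ℙ := by
  have hsp : s = fun t => p t / (ℙ {ω | t ≤ T ω}).toReal := funext hs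
  have hs0 : 0 ≤ s := fun t => hsp ▸ div_nonneg (hppos t) ENNReal.toReal_nonneg
  have hsm : Measurable s := hsp ▸ hp.div antitone_toReal_measure_le.measurable
  have hsint : IntegrableOn s (Icc 0 1) :=
    hsp ▸ (integrableOn_hazard hp hppos hdens hsurv).mono_set Icc_subset_Iic_self
  have hsY : ∀ A ω, ∫ t in A, s t * Y t ω = ∫ t in A ∩ Iic (min (T ω) (C ω)), s t := by
    intro A ω
    rw [← setIntegral_indicator measurableSet_Iic]
    congr! 2 with t
    by_cases h : t ≤ min (T ω) (C ω) <;> simp [hY, h]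
  refine ⟨?_, fun I hIsub _ => ?_⟩
  · have hG0 : ℙ {ω | (0 : ℝ) ≤ T ω} = 1 := by simp [hTpos]
    rw [hsp, integral_hazard_eq_log_sub_log hT hp hppos hdens zero_le_one hsurv, hG0,
      ENNReal.toReal_one, log_one, zero_sub]
  · have hcomp : ∀ u ∈ I, ∫⁻ t in I ∩ Ici u, ENNReal.ofReal (s t) *
        ℙ {ω | t ≤ min (T ω) (C ω)} ≤ ℙ {ω | u ≤ min (T ω) (C ω)} := fun u hu =>
      (lintegral_mono_set fun t ht => (⟨ht.2, (hIsub ht.1).2.le⟩ : t ∈ Icc u 1)).trans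
        (setLIntegral_hazard_mul_atRisk_le hT hC hsm hs0 hsint
          (fun t ht => by simp_rw [hmean t ht.1, intervalIntegral.integral_of_le ht.1, hsY])
          ⟨(hIsub hu).1, (hIsub hu).2.le⟩)
    simp_rw [hsY]
    exact variance_setIntegral_inter_Iic_le (hT.min hC) hsm hs0
      (hsint.mono_set fun t ht => ⟨(hIsub ht).1, (hIsub ht).2.le⟩) hcomp

/-- **Proposition `P-surv`: right-censored survival data.**
Let `T` have density `p` w.r.t. Lebesgue measure with `P[T ≥ 1] > 0`, let `C` be a
censoring variable, `T̃ = min{T,C}`, `Y_t = 1_{T̃ ≥ t}` the at-risk process, and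
`s(t) = p(t)/P[T ≥ t]` the hazard rate.  If for all `t ≥ 0`,
`P[T ≤ t, T ≤ C] = E[∫₀ᵗ s(u) Y_u du]`, then
(i) `∫₀¹ s(t) dt = −log(P[T ≥ 1])`, and
(ii) for every interval `I ⊆ [0,1)`,
`Var[∫_I s(t) Y_t dt] ≤ 2 E[∫_I s(t) Y_t dt]`. -/
theorem statement19
    {Ω : Type*} [MeasureSpace Ω] [IsProbabilityMeasure (ℙ : Measure Ω)]
    (T C : Ω → ℝ) (hT : Measurable T) (hC : Measurable C)
    (hTpos : ∀ ω, 0 ≤ T ω) (hCpos : ∀ ω, 0 ≤ C ω)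
    (p : ℝ → ℝ) (hp : Measurable p) (hppos : ∀ t, 0 ≤ p t)
    (hdens : Measure.map T ℙ = volume.withDensity fun t => ENNReal.ofReal (p t))
    (hsurv : 0 < (ℙ {ω | 1 ≤ T ω}).toReal)
    (s : ℝ → ℝ) (hs : ∀ t, s t = p t / (ℙ {ω | t ≤ T ω}).toReal)
    (Y : ℝ → Ω → ℝ) (hY : ∀ t ω, Y t ω = if t ≤ min (T ω) (C ω) then 1 else 0)
    (hmean : ∀ t : ℝ, 0 ≤ t →
      (ℙ {ω | T ω ≤ t ∧ T ω ≤ C ω}).toReal = ∫ ω, (∫ u in (0:ℝ)..t, s u * Y u ω) ∂ℙ) :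
    ((∫ t in (0:ℝ)..1, s t) = -Real.log ((ℙ {ω | 1 ≤ T ω}).toReal)) ∧
    ∀ I : Set ℝ, I ⊆ Set.Ico (0:ℝ) 1 → I.OrdConnected →
      variance (fun ω => ∫ t in I, s t * Y t ω) ℙ ≤
        2 * ∫ ω, (∫ t in I, s t * Y t ω) ∂ℙ :=
  statement19_general T C hT hC hTpos p hp hppos hdens hsurv s hs Y hY hmean
end
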